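/- Every preferred extension of a Deductive ASPIC⊖ argumentation system is closed under strict rules: if E is a preferred extension and r : φ₀,...,φ_m → ψ is a strict rule with φ₀,...,φ_m ∈ E^C (the set of conclusions of arguments in E), then ψ ∈ E^C. -/

import Mathlib

namespace JS

inductive Lab : Type
  | IN | OUT | UNDEC
deriving DecidableEq

structure JSBAF (A : Type) where
  att : A → A → Prop
  supp : Set A → A → Prop
  pref : A → A → Prop

variable {A : Type}

/-- Strict arguments: supported by the empty set or only by strict arguments. -/
inductive Strict (J : JSBAF A) : A → Prop
  | mk (S : Set A) (a : A) (h : J.supp S a) (hS : ∀ b ∈ S, Strict J b) : Strict J a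

/-- Structural restrictions on JSBAFs. -/
structure Restr (J : JSBAF A) : Prop where
  finSupp : ∀ S b, J.supp S b → S.Finite
  uniqSupp : ∀ S S' b, J.supp S b → J.supp S' b → S = S'
  acyc : ∀ a, ¬ Relation.TransGen (fun x y => ∃ S, J.supp S y ∧ x ∈ S) a a
  strictUnatt : ∀ a b, Strict J b → ¬ J.att a b
  prefRefl : ∀ a, J.pref a a
  prefTrans : ∀ a b c, J.pref a b → J.pref b c → J.pref a c
  prefTotal : ∀ a b, J.pref a b ∨ J.pref b a
  strictEq : ∀ a b, Strict J a → Strict J b → J.pref a b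
  strictTop : ∀ a b, ¬ Strict J a → Strict J b → J.pref a b ∧ ¬ J.pref b a

def inL (L : A → Lab) : Set A := {a | L a = Lab.IN}
def outL (L : A → Lab) : Set A := {a | L a = Lab.OUT}
def undecL (L : A → Lab) : Set A := {a | L a = Lab.UNDEC}

/-- Definition 2, item 1: legally IN. -/
def legallyIn (J : JSBAF A) (L : A → Lab) (a : A) : Prop :=
  (∀ b, J.att b a → L b = Lab.OUT) ∧
  ∀ S c, J.supp S c → a ∈ S → (∀ b ∈ S, b ≠ a → J.pref a b) →
    (L c = Lab.IN ∨
     (L c = Lab.UNDEC ∧ ∃ b ∈ S, b ≠ a ∧ (L b = Lab.OUT ∨ L b = Lab.UNDEC)) ∨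
     (L c = Lab.OUT ∧
       ((∃ b ∈ S, b ≠ a ∧ L b = Lab.OUT) ∨
        (∃ b₁ ∈ S, ∃ b₂ ∈ S, b₁ ≠ a ∧ b₂ ≠ a ∧ b₁ ≠ b₂ ∧
          L b₁ = Lab.UNDEC ∧ L b₂ = Lab.UNDEC))))

/-- Definition 2, item 2: legally OUT. -/
def legallyOut (J : JSBAF A) (L : A → Lab) (a : A) : Prop :=
  (∃ b, J.att b a ∧ L b = Lab.IN) ∨
  (∃ (n : ℕ) (S : ℕ → Set A) (b : ℕ → A),
    (∀ i ≤ n, J.supp (S i) (b i)) ∧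
    (∀ i < n, b i ∈ S (i + 1)) ∧
    a ∈ S 0 ∧
    (∀ d ∈ S 0, d ≠ a → L d = Lab.IN) ∧
    (∃ c, J.att c (b n) ∧ L c = Lab.IN) ∧
    (∀ i ≤ n, L (b i) = Lab.OUT) ∧
    (∀ i, 1 ≤ i → i ≤ n → ∀ d ∈ S i, d ≠ b (i - 1) → L d = Lab.IN) ∧
    (∀ d ∈ S 0, d ≠ a → J.pref a d))

/-- Admissible labelings. -/
def Admissible (J : JSBAF A) (L : A → Lab) : Prop :=
  (∀ a, L a = Lab.IN → legallyIn J L a) ∧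
  (∀ a, L a = Lab.OUT ↔ legallyOut J L a) ∧
  (∀ a, Strict J a → L a = Lab.IN)

/-- Preferred labelings: maximal admissible w.r.t. inclusion of IN-sets. -/
def Preferred (J : JSBAF A) (L : A → Lab) : Prop :=
  Admissible J L ∧ ∀ L', Admissible J L' → ¬ (inL L ⊂ inL L')

/-- The iterated OUT-sets of the SIM labeling. -/
def simO (J : JSBAF A) : ℕ → Set A
  | 0 => {a | ∃ b, Strict J b ∧ J.att b a}
  | n + 1 => simO J n ∪
      {a | ∃ S c, J.supp S c ∧ a ∈ S ∧ c ∈ simO J n ∧ ∀ d ∈ S, d ≠ a → Strict J d}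

def simIn (J : JSBAF A) : Set A := {a | Strict J a}
def simOut (J : JSBAF A) : Set A := ⋃ n, simO J n

open Classical in
/-- The strict-including-minimal labeling. -/
noncomputable def SIM (J : JSBAF A) : A → Lab := fun a =>
  if Strict J a then Lab.IN else if a ∈ simOut J then Lab.OUT else Lab.UNDEC

/-- The order on labelings. -/
def leL (L₁ L₂ : A → Lab) : Prop := inL L₁ ⊆ inL L₂ ∧ outL L₁ ⊆ outL L₂

end JS
namespace ASPIC

/-- An underlying logical language: formulas, atoms, interpretations, a classical
negation and conjunction, and the interpolation-style assumption on syntactically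
disjoint sets of formulas. -/
structure Logic where
  F : Type
  Atom : Type
  atoms : F → Set Atom
  I : Type
  inhab : Nonempty I
  Models : I → F → Prop
  neg : F → F
  conj : F → F → F
  neg_spec : ∀ i φ, Models i (neg φ) ↔ ¬ Models i φ
  conj_spec : ∀ i φ ψ, Models i (conj φ ψ) ↔ (Models i φ ∧ Models i ψ)
  atoms_neg : ∀ φ, atoms (neg φ) = atoms φ
  atoms_conj : ∀ φ ψ, atoms (conj φ ψ) = atoms φ ∪ atoms ψ
  interp : ∀ Γ Δ : Set F, (∀ φ ∈ Γ, ∀ ψ ∈ Δ, atoms φ ∩ atoms ψ = ∅) →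
    (∃ i, ∀ φ ∈ Γ, Models i φ) → (∃ i, ∀ ψ ∈ Δ, Models i ψ) →
    (∃ i, (∀ φ ∈ Γ, Models i φ) ∧ (∀ ψ ∈ Δ, Models i ψ))

/-- The model-based consequence relation ⊨_C. -/
def Conseq (L : Logic) (Γ : Set L.F) (φ : L.F) : Prop :=
  ∀ i, (∀ ψ ∈ Γ, L.Models i ψ) → L.Models i φ

/-- φ = −ψ: one formula is the negation of the other. -/
def negOf (L : Logic) (φ ψ : L.F) : Prop := φ = L.neg ψ ∨ ψ = L.neg φ

/-- Conjunction of a nonempty list of formulas: conjL L φ [ψ₁,…] = φ ∧ ψ₁ ∧ … . -/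
def conjL (L : Logic) : L.F → List L.F → L.F
  | φ, [] => φ
  | φ, ψ :: l => L.conj φ (conjL L ψ l)

/-- A (defeasible) rule: antecedents and conclusion. -/
abbrev Rule (L : Logic) := List L.F × L.F

/-- An argumentation system of Deductive ASPIC⊖: satisfiable axioms, defeasible rules,
a (partial) naming function and a total preorder on defeasible rules.  The strict rules
are the axiomatic rules together with all consequence-based rules. -/
structure ASys (L : Logic) where
  AX : Set L.F
  AX_sat : ∃ i, ∀ φ ∈ AX, L.Models i φ
  Rd : Set (Rule L)
  name : Rule L → Option L.F
  rpref : Rule L → Rule L → Prop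
  rpref_refl : ∀ r, rpref r r
  rpref_trans : ∀ r s t, rpref r s → rpref s t → rpref r t
  rpref_total : ∀ r s, rpref r s ∨ rpref s r

/-- Top-rule kinds: axiomatic, consequence-based strict, defeasible. -/
inductive RK : Type
  | ax | cb | df
deriving DecidableEq

/-- Argument trees (with the kind of the top rule and the conclusion recorded). -/
inductive Arg (L : Logic) : Type
  | node (k : RK) (subs : List (Arg L)) (concl : L.F)

def Arg.concl {L : Logic} : Arg L → L.F
  | .node _ _ φ => φ

def Arg.subs {L : Logic} : Arg L → List (Arg L)
  | .node _ s _ => s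

def Arg.kind {L : Logic} : Arg L → RK
  | .node k _ _ => k

/-- Well-formed arguments of an argumentation system. -/
inductive Wf (L : Logic) (as : ASys L) : Arg L → Prop
  | ax (φ : L.F) (h : φ ∈ as.AX) : Wf L as (.node .ax [] φ)
  | cb (subs : List (Arg L)) (φ : L.F) (hs : ∀ a ∈ subs, Wf L as a)
      (h : Conseq L {ψ | ∃ a ∈ subs, Arg.concl a = ψ} φ) : Wf L as (.node .cb subs φ)
  | df (subs : List (Arg L)) (φ : L.F) (hs : ∀ a ∈ subs, Wf L as a)
      (h : (subs.map Arg.concl, φ) ∈ as.Rd) : Wf L as (.node .df subs φ)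

/-- Sub-argument relation: `Sub a b` means a is a sub-argument of b. -/
inductive Sub (L : Logic) : Arg L → Arg L → Prop
  | refl (a : Arg L) : Sub L a a
  | step (a b : Arg L) (k : RK) (subs : List (Arg L)) (φ : L.F)
      (hb : b ∈ subs) (h : Sub L a b) : Sub L a (.node k subs φ)

/-- Conclusions of the sub-arguments of a. -/
def SubC (L : Logic) (a : Arg L) : Set L.F := {φ | ∃ b, Sub L b a ∧ Arg.concl b = φ}

/-- Axiomatic and defeasible sub-arguments. -/
def ADSub (L : Logic) (a : Arg L) : Set (Arg L) := {b | Sub L b a ∧ Arg.kind b ≠ RK.cb}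

/-- Conclusions of the axiomatic and defeasible sub-arguments. -/
def ADSubC (L : Logic) (a : Arg L) : Set L.F :=
  {φ | ∃ b, Sub L b a ∧ Arg.kind b ≠ RK.cb ∧ Arg.concl b = φ}

/-- Defeasible rules used in an argument. -/
def DR (L : Logic) (a : Arg L) : Set (Rule L) :=
  {r | ∃ subs, Sub L (Arg.node RK.df subs r.2) a ∧ r.1 = subs.map Arg.concl}

/-- Strict arguments: no defeasible rules used. -/
def IsStrictArg (L : Logic) (a : Arg L) : Prop := DR L a = ∅

/-- Elitist weakest-link lifting of the rule preorder to arguments (a ⪯_ewl b). -/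
def ewl (L : Logic) (as : ASys L) (a b : Arg L) : Prop :=
  (DR L a = ∅ ∧ DR L b = ∅) ∨ ∃ ra ∈ DR L a, ∀ rb ∈ DR L b, as.rpref ra rb

/-- a undercuts b: the conclusion of a is the negation of the name of a defeasible rule
used in b. -/
def Undercuts (L : Logic) (as : ASys L) (a b : Arg L) : Prop :=
  ∃ subs φ, Sub L (Arg.node RK.df subs φ) b ∧
    ∃ nm, as.name (subs.map Arg.concl, φ) = some nm ∧ negOf L (Arg.concl a) nm

/-- a gen-rebuts b: b is defeasible and the conclusion of a is the negation of a conjunction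
of conclusions of sub-arguments of b. -/
def GenRebuts (L : Logic) (a b : Arg L) : Prop :=
  DR L b ≠ ∅ ∧ ∃ (φ : L.F) (l : List L.F),
    (∀ χ ∈ φ :: l, χ ∈ SubC L b) ∧ Arg.concl a = L.neg (conjL L φ l)

/-- a defeats b: a undercuts b, or a gen-rebuts b and a is not strictly weaker than b. -/
def Defeats (L : Logic) (as : ASys L) (a b : Arg L) : Prop :=
  Undercuts L as a b ∨
    (GenRebuts L a b ∧ ¬ (ewl L as a b ∧ ¬ ewl L as b a))

/-- The strict rules of an argumentation system: axiomatic or consequence-based. -/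
def StrictRule (L : Logic) (as : ASys L) (r : Rule L) : Prop :=
  (r.1 = [] ∧ r.2 ∈ as.AX) ∨ Conseq L {φ | φ ∈ r.1} r.2

end ASPIC

namespace ASPIC

/-- The well-formed arguments of an argumentation system. -/
def WfArg (L : Logic) (as : ASys L) : Type := {a : Arg L // Wf L as a}

/-- The JSBAF corresponding to an argumentation system: attacks are defeats, supports are
applications of strict rules, preferences are the elitist weakest-link lifting. -/
def toJ (L : Logic) (as : ASys L) : JS.JSBAF (WfArg L as) where
  att a b := Defeats L as a.1 b.1
  supp S b := (Arg.kind b.1 = RK.ax ∨ Arg.kind b.1 = RK.cb) ∧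
    S = {a : WfArg L as | a.1 ∈ Arg.subs b.1}
  pref a b := ewl L as a.1 b.1

/-- The conclusions of the IN-arguments of a labeling. -/
def concls (L : Logic) (as : ASys L) (Lb : WfArg L as → JS.Lab) : Set L.F :=
  {φ | ∃ a : WfArg L as, Lb a = JS.Lab.IN ∧ Arg.concl a.1 = φ}

/-- The AS is consistent: no two strict arguments have contradictory conclusions. -/
def ASConsistent (L : Logic) (as : ASys L) : Prop :=
  ¬ ∃ a b : Arg L, Wf L as a ∧ Wf L as b ∧ DR L a = ∅ ∧ DR L b = ∅ ∧
      negOf L (Arg.concl a) (Arg.concl b)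

end ASPIC

/-! An argument formed by a strict rule from IN arguments is itself IN in every admissible labeling
of the corresponding JSBAF. If it uses no defeasible rule it is strict, and strict arguments are
IN. Otherwise pick a weakest defeasible rule of the whole argument: the direct sub-argument
containing it is `ewl`-below all its siblings, so the legally-IN condition of that sub-argument,
applied to the support formed by the strict rule, forces the conclusion IN, since no sibling is
OUT or UNDEC. -/

theorem Set.Finite.exists_forall_rel_of_total {α : Type*} {r : α → α → Prop}
    (trans : ∀ a b c, r a b → r b c → r a c) (total : ∀ a b, r a b ∨ r b a)
    {s : Set α} (hs : s.Finite) (hne : s.Nonempty) : ∃ a ∈ s, ∀ b ∈ s, r a b := by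
  induction s, hs using Set.Finite.induction_on with
  | empty => exact absurd hne Set.not_nonempty_empty
  | @insert a t _ _ ih =>
    rcases t.eq_empty_or_nonempty with rfl | ht
    · refine ⟨a, Set.mem_insert a ∅, fun b hb => ?_⟩
      obtain rfl | hb := hb
      exacts [(total b b).elim id id, (Set.notMem_empty b hb).elim]
    obtain ⟨m, hmt, hm⟩ := ih ht
    rcases total a m with ham | hma
    · refine ⟨a, Set.mem_insert a t, fun b hb => ?_⟩
      rcases hb with rfl | hb
      exacts [(total b b).elim id id, trans _ _ _ ham (hm b hb)]
    · refine ⟨m, Set.mem_insert_of_mem a hmt, fun b hb => ?_⟩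
      rcases hb with rfl | hb
      exacts [hma, hm b hb]

theorem JS.Admissible.eq_in_of_supp {A : Type} {J : JSBAF A} {L : A → Lab}
    (hL : Admissible J L) {S : Set A} {a c : A} (hS : J.supp S c) (ha : a ∈ S)
    (hweakest : ∀ b ∈ S, b ≠ a → J.pref a b) (hin : ∀ b ∈ S, L b = Lab.IN) : L c = Lab.IN := by
  -- every alternative to `L c = IN` in the legally-IN condition needs a member of `S` not IN
  rcases (hL.1 a (hin a ha)).2 S c hS ha hweakest with hc | ⟨-, b, hb, -, hbL⟩ |
      ⟨-, ⟨b, hb, -, hbL⟩ | ⟨b, hb, -, -, -, -, -, hbL, -⟩⟩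
  · exact hc
  all_goals simp [hin b hb] at hbL

namespace ASPIC

variable {L : Logic} {as : ASys L}

theorem RK.eq_ax_or_eq_cb_of_ne_df {k : RK} (hk : k ≠ RK.df) : k = RK.ax ∨ k = RK.cb := by
  cases k <;> simp at hk ⊢

@[elab_as_elim]
theorem Arg.induction_on_subs {motive : Arg L → Prop}
    (node : ∀ k subs φ, (∀ x ∈ subs, motive x) → motive (.node k subs φ)) :
    ∀ a, motive a
  | .node k subs φ => node k subs φ fun x _ => Arg.induction_on_subs node x

theorem Wf.of_mem_subs {a x : Arg L} (ha : Wf L as a) (hx : x ∈ a.subs) : Wf L as x := by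
  cases ha with
  | ax => simp [Arg.subs] at hx
  | cb _ _ hs => exact hs x hx
  | df _ _ hs => exact hs x hx

theorem mem_DR_node {k : RK} {subs : List (Arg L)} {φ : L.F} {r : Rule L} :
    r ∈ DR L (.node k subs φ) ↔
      (k = RK.df ∧ r = (subs.map Arg.concl, φ)) ∨ ∃ x ∈ subs, r ∈ DR L x := by
  constructor
  · rintro ⟨subs', hsub, hr⟩
    cases hsub with
    | refl => exact Or.inl ⟨rfl, Prod.ext hr rfl⟩
    | step x _ _ _ hx hsub => exact Or.inr ⟨x, hx, subs', hsub, hr⟩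
  · rintro (⟨rfl, rfl⟩ | ⟨x, hx, subs', hsub, hr⟩)
    · exact ⟨subs, Sub.refl _, rfl⟩
    · exact ⟨subs', Sub.step _ x _ _ _ hx hsub, hr⟩

theorem finite_DR (a : Arg L) : (DR L a).Finite := by
  induction a using Arg.induction_on_subs with
  | node k subs φ ih =>
    refine ((Set.finite_singleton (subs.map Arg.concl, φ)).union
      (subs.finite_toSet.biUnion ih)).subset fun r hr => ?_
    rcases mem_DR_node.1 hr with ⟨-, rfl⟩ | ⟨x, hx, hr⟩
    exacts [Or.inl rfl, Or.inr (Set.mem_biUnion hx hr)]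

theorem strict_of_DR_eq_empty (a : WfArg L as) (ha : DR L a.1 = ∅) :
    JS.Strict (toJ L as) a := by
  obtain ⟨a, wf⟩ := a
  induction a using Arg.induction_on_subs with
  | node k subs φ ih =>
    have hk : k ≠ RK.df := by
      rintro rfl
      exact Set.eq_empty_iff_forall_notMem.1 ha _ (mem_DR_node.2 (Or.inl ⟨rfl, rfl⟩))
    refine JS.Strict.mk _ _ ⟨RK.eq_ax_or_eq_cb_of_ne_df hk, rfl⟩ fun x hx => ih x.1 hx x.2 ?_
    exact Set.eq_empty_of_forall_notMem fun r hr =>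
      ha.subset (mem_DR_node.2 (Or.inr ⟨x.1, hx, hr⟩))

theorem exists_mem_subs_forall_ewl {k : RK} (hk : k ≠ RK.df) {subs : List (Arg L)} {φ : L.F}
    (hne : (DR L (.node k subs φ)).Nonempty) :
    ∃ a ∈ subs, ∀ x ∈ subs, ewl L as a x := by
  obtain ⟨r, hr, hmin⟩ :=
    (finite_DR _).exists_forall_rel_of_total as.rpref_trans as.rpref_total hne
  obtain ⟨a, ha, hra⟩ := (mem_DR_node.1 hr).resolve_left fun h => hk h.1
  exact ⟨a, ha, fun x hx =>
    Or.inr ⟨r, hra, fun s hs => hmin s (mem_DR_node.2 (Or.inr ⟨x, hx, hs⟩))⟩⟩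

theorem eq_in_of_forall_subs_in {Lb : WfArg L as → JS.Lab}
    (hLb : JS.Admissible (toJ L as) Lb) (b : WfArg L as) (hk : b.1.kind ≠ RK.df)
    (hsubs : ∀ a : WfArg L as, a.1 ∈ b.1.subs → Lb a = JS.Lab.IN) : Lb b = JS.Lab.IN := by
  obtain ⟨⟨k, subs, φ⟩, wf⟩ := b
  rcases (DR L (.node k subs φ)).eq_empty_or_nonempty with hdr | hdr
  · exact hLb.2.2 _ (strict_of_DR_eq_empty _ hdr)
  obtain ⟨a, ha, hweakest⟩ := exists_mem_subs_forall_ewl (as := as) hk hdr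
  have hsupp : (toJ L as).supp {x | x.1 ∈ subs} ⟨_, wf⟩ :=
    ⟨RK.eq_ax_or_eq_cb_of_ne_df hk, rfl⟩
  exact JS.Admissible.eq_in_of_supp hLb hsupp (a := ⟨a, wf.of_mem_subs ha⟩) ha
    (fun x hx _ => hweakest x.1 hx) hsubs

theorem exists_in_args_of_subset_concls {Lb : WfArg L as → JS.Lab} {prem : List L.F}
    (h : ∀ φ ∈ prem, φ ∈ concls L as Lb) :
    ∃ l : List (WfArg L as), (∀ a ∈ l, Lb a = JS.Lab.IN) ∧ l.map (·.1.concl) = prem := by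
  induction prem with
  | nil => exact ⟨[], by simp⟩
  | cons φ prem ih =>
    obtain ⟨a, ha, rfl⟩ := h φ List.mem_cons_self
    obtain ⟨l, hl, rfl⟩ := ih fun ψ hψ => h ψ (List.mem_cons_of_mem _ hψ)
    exact ⟨a :: l, List.forall_mem_cons.2 ⟨ha, hl⟩, rfl⟩

end ASPIC

open ASPIC in
/-- Every preferred extension of a Deductive ASPIC⊖ argumentation system is closed
under strict rules: if all antecedents of a strict rule are conclusions of IN-arguments, so is
its conclusion. -/
theorem preferred_closed_under_strict_rules (L : Logic) (as : ASys L)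
    (Lb : WfArg L as → JS.Lab) (hpr : JS.Preferred (toJ L as) Lb)
    (prem : List L.F) (ψ : L.F) (hr : StrictRule L as (prem, ψ))
    (hprem : ∀ φ ∈ prem, φ ∈ concls L as Lb) :
    ψ ∈ concls L as Lb := by
  rcases hr with ⟨-, hax⟩ | hcons
  · exact ⟨⟨_, Wf.ax ψ hax⟩, eq_in_of_forall_subs_in hpr.1 _ nofun (by simp [Arg.subs]), rfl⟩
  obtain ⟨l, hl, rfl⟩ := exists_in_args_of_subset_concls hprem
  have wf : Wf L as (.node .cb (l.map (·.1)) ψ) := by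
    refine Wf.cb _ ψ (fun x hx => ?_) fun i hi => hcons i fun φ hφ => ?_
    · obtain ⟨a, -, rfl⟩ := List.mem_map.1 hx
      exact a.2
    · obtain ⟨a, ha, rfl⟩ := List.mem_map.1 hφ
      exact hi _ ⟨a.1, List.mem_map_of_mem ha, rfl⟩
  refine ⟨⟨_, wf⟩, eq_in_of_forall_subs_in hpr.1 _ nofun fun a ha => ?_, rfl⟩
  obtain ⟨a', ha', he⟩ := List.mem_map.1 ha
  exact Subtype.ext he ▸ hl a' ha'
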